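/- arXiv:1306.4919 — 7 statements merged into one kernel-verified Lean document; each statement's English description precedes it below -/
import Mathlib

section
/- Let d ≥ 1, let t > 1 and let s ≥ 2t/(t−1). Let A, B ⊆ ℝ^d be nonempty bounded s-well-separated sets. Then for all points u, x ∈ A and v, y ∈ B with dist(u, v) ≤ dist(x, y), one has t·dist(x, u) + dist(u, v) + t·dist(v, y) ≤ t·dist(x, y). -/
/-- Let d ≥ 1, let t > 1 and let s ≥ 2t/(t−1). Let A, B ⊆ ℝ^d be nonempty
bounded s-well-separated sets. Then for all points u, x ∈ A and v, y ∈ B with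
dist(u, v) ≤ dist(x, y), one has
t·dist(x, u) + dist(u, v) + t·dist(v, y) ≤ t·dist(x, y). -/
theorem stmt_0 (d : ℕ) (hd : 1 ≤ d) (t s : ℝ) (ht : 1 < t) (hs : 2 * t / (t - 1) ≤ s)
    (A B : Set (EuclideanSpace ℝ (Fin d))) (hA : A.Nonempty) (hB : B.Nonempty)
    (hAb : Bornology.IsBounded A) (hBb : Bornology.IsBounded B)
    (hsep : ∀ a ∈ A, ∀ b ∈ B, s * max (Metric.diam A) (Metric.diam B) ≤ dist a b) :
    ∀ u ∈ A, ∀ x ∈ A, ∀ v ∈ B, ∀ y ∈ B, dist u v ≤ dist x y →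
      t * dist x u + dist u v + t * dist v y ≤ t * dist x y := by
  intro u hu x hx v hv y hy huv
  set M := max (Metric.diam A) (Metric.diam B) with hM
  have ht1 : (0:ℝ) < t - 1 := by linarith
  have hspos : (0:ℝ) < s := lt_of_lt_of_le (by positivity) hs
  have hst : 2 * t ≤ s * (t - 1) := by
    rw [div_le_iff₀ ht1] at hs; linarith
  have hxu : dist x u ≤ M :=
    le_trans (Metric.dist_le_diam_of_mem hAb hx hu) (le_max_left _ _)
  have hvy : dist v y ≤ M :=
    le_trans (Metric.dist_le_diam_of_mem hBb hv hy) (le_max_right _ _)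
  have hsxy : s * M ≤ dist x y := hsep x hx y hy
  have hM0 : 0 ≤ M := le_trans Metric.diam_nonneg (le_max_left _ _)
  nlinarith [mul_le_mul_of_nonneg_left hsxy (le_of_lt ht1),
    mul_le_mul_of_nonneg_right hst hM0]
end

section
/- Let 1 < t, let s = 2t/(t−1), let V ⊆ ℝ^d be a finite set, and let G be a simple graph on V. Suppose: (i) for every two distinct points p, q ∈ V there is a walk in G from p to q of length at most t·dist(p, q) all of whose edges {a, b} satisfy dist(a, b) ≤ dist(p, q); and (ii) for every edge {x, y} of G, every walk in G from x to y that does not traverse the edge {x, y} and all of whose edges {a, b} satisfy dist(a, b) ≤ dist(x, y) has length strictly greater than t·dist(x, y). Then for every pair of nonempty bounded s-well-separated sets A, B ⊆ ℝ^d, the graph G has at most one edge {u, v} with u ∈ A and v ∈ B. -/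
/-- The length of a walk in a graph whose vertices are points of a metric space:
the sum of the distances between consecutive vertices. -/
noncomputable def walkLength {α : Type*} [PseudoMetricSpace α] {G : SimpleGraph α} {u v : α}
    (p : G.Walk u v) : ℝ :=
  (p.darts.map (fun e => dist e.toProd.1 e.toProd.2)).sum

open SimpleGraph in
/-- Key lemma: given the spanner properties and two edges whose endpoints are pairwise
close (within `M`) while the edges themselves are long (at least `2t/(t-1) * M`),
the two edges must coincide. -/
lemma aux_lem {α : Type*} [MetricSpace α] {G : SimpleGraph α} {t : ℝ} (ht : 1 < t)
    (hi : ∀ p q : α, p ≠ q →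
      ∃ w : G.Walk p q, walkLength w ≤ t * dist p q ∧
        ∀ e ∈ w.darts, dist e.toProd.1 e.toProd.2 ≤ dist p q)
    (hii : ∀ x y : α, G.Adj x y →
      ∀ w : G.Walk x y, s(x, y) ∉ w.edges →
        (∀ e ∈ w.darts, dist e.toProd.1 e.toProd.2 ≤ dist x y) →
        t * dist x y < walkLength w)
    {u v u' v' : α} (huv : G.Adj u v) (hu'v' : G.Adj u' v')
    {M : ℝ} (hM : 0 ≤ M)
    (hA : dist u u' ≤ M) (hB : dist v v' ≤ M)
    (hsep : 2 * t / (t - 1) * M ≤ dist u v)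
    (hle : dist u' v' ≤ dist u v)
    (hne : s(u, v) ≠ s(u', v')) : False := by
  have ht0 : (0:ℝ) < t - 1 := by linarith
  have hD : 0 < dist u v := dist_pos.2 huv.ne
  have hMlt : M < dist u v := by
    rcases eq_or_lt_of_le hM with h | h
    · linarith
    · have hs1 : 1 < 2 * t / (t - 1) := by
        rw [lt_div_iff₀ ht0]; linarith
      nlinarith
  have h2tM : 2 * t * M ≤ (t - 1) * dist u v := by
    rw [div_mul_eq_mul_div, div_le_iff₀ ht0] at hsep
    nlinarith
  obtain ⟨w1, hw1l, hw1d⟩ : ∃ w : G.Walk u u', walkLength w ≤ t * dist u u' ∧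
      ∀ e ∈ w.darts, dist e.toProd.1 e.toProd.2 ≤ dist u u' := by
    by_cases h : u = u'
    · subst h; exact ⟨SimpleGraph.Walk.nil, by simp [walkLength], by simp⟩
    · exact hi u u' h
  obtain ⟨w2, hw2l, hw2d⟩ : ∃ w : G.Walk v' v, walkLength w ≤ t * dist v' v ∧
      ∀ e ∈ w.darts, dist e.toProd.1 e.toProd.2 ≤ dist v' v := by
    by_cases h : v' = v
    · subst h; exact ⟨SimpleGraph.Walk.nil, by simp [walkLength], by simp⟩
    · exact hi v' v h
  set w : G.Walk u v := w1.append (SimpleGraph.Walk.cons hu'v' w2) with hw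
  have hdarts : w.darts = w1.darts ++ (⟨(u', v'), hu'v'⟩ : G.Dart) :: w2.darts := by
    simp [hw, SimpleGraph.Walk.darts_append, SimpleGraph.Walk.darts_cons]
  have hdv' : dist v' v ≤ M := by rw [_root_.dist_comm]; exact hB
  -- all darts of the walk are short
  have hdbound : ∀ e ∈ w.darts, dist e.toProd.1 e.toProd.2 ≤ dist u v := by
    intro e he
    rw [hdarts] at he
    rcases List.mem_append.1 he with h1 | h1
    · exact le_of_lt (lt_of_le_of_lt (le_trans (hw1d e h1) hA) hMlt)
    · rcases List.mem_cons.1 h1 with h2 | h2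
      · subst h2; exact hle
      · exact le_of_lt (lt_of_le_of_lt (le_trans (hw2d e h2) hdv') hMlt)
  -- the walk avoids the edge s(u,v)
  have hnotin : s(u, v) ∉ w.edges := by
    intro hmem
    simp only [SimpleGraph.Walk.edges, List.mem_map] at hmem
    obtain ⟨e, he, heq⟩ := hmem
    have heq' : s(e.toProd.1, e.toProd.2) = s(u, v) := heq
    have hde : dist e.toProd.1 e.toProd.2 = dist u v := by
      rcases Sym2.eq_iff.1 heq' with ⟨h1, h2⟩ | ⟨h1, h2⟩
      · rw [h1, h2]
      · rw [h1, h2, _root_.dist_comm]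
    rw [hdarts] at he
    rcases List.mem_append.1 he with h1 | h1
    · have := lt_of_le_of_lt (le_trans (hw1d e h1) hA) hMlt
      linarith
    · rcases List.mem_cons.1 h1 with h2 | h2
      · apply hne
        rw [← heq', h2]
      · have := lt_of_le_of_lt (le_trans (hw2d e h2) hdv') hMlt
        linarith
  have hwl : walkLength w = walkLength w1 + (dist u' v' + walkLength w2) := by
    simp [walkLength, hdarts]
  have hkey := hii u v huv w hnotin hdbound
  have h1 : t * dist u u' ≤ t * M := mul_le_mul_of_nonneg_left hA (by linarith)
  have h2 : t * dist v' v ≤ t * M := mul_le_mul_of_nonneg_left hdv' (by linarith)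
  linarith

/-- Let 1 < t, let s = 2t/(t−1), let V ⊆ ℝ^d be a finite set, and let G be a
simple graph on V. Suppose: (i) for every two distinct points p, q ∈ V there is a walk in G
from p to q of length at most t·dist(p, q) all of whose edges {a, b} satisfy
dist(a, b) ≤ dist(p, q); and (ii) for every edge {x, y} of G, every walk in G from x to y
that does not traverse the edge {x, y} and all of whose edges {a, b} satisfy
dist(a, b) ≤ dist(x, y) has length strictly greater than t·dist(x, y).
Then for every pair of nonempty bounded s-well-separated sets A, B ⊆ ℝ^d, the graph G has
at most one edge {u, v} with u ∈ A and v ∈ B. -/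
theorem stmt_1 (d : ℕ) (t : ℝ) (ht : 1 < t) (s : ℝ) (hs : s = 2 * t / (t - 1))
    (V : Finset (EuclideanSpace ℝ (Fin d)))
    (G : SimpleGraph {p : EuclideanSpace ℝ (Fin d) // p ∈ V})
    (hi : ∀ p q : {p : EuclideanSpace ℝ (Fin d) // p ∈ V}, p ≠ q →
      ∃ w : G.Walk p q, walkLength w ≤ t * dist p q ∧
        ∀ e ∈ w.darts, dist e.toProd.1 e.toProd.2 ≤ dist p q)
    (hii : ∀ x y : {p : EuclideanSpace ℝ (Fin d) // p ∈ V}, G.Adj x y →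
      ∀ w : G.Walk x y, s(x, y) ∉ w.edges →
        (∀ e ∈ w.darts, dist e.toProd.1 e.toProd.2 ≤ dist x y) →
        t * dist x y < walkLength w) :
    ∀ A B : Set (EuclideanSpace ℝ (Fin d)), A.Nonempty → B.Nonempty →
      Bornology.IsBounded A → Bornology.IsBounded B →
      (∀ a ∈ A, ∀ b ∈ B, s * max (Metric.diam A) (Metric.diam B) ≤ dist a b) →
      ∀ u v u' v' : {p : EuclideanSpace ℝ (Fin d) // p ∈ V},
        G.Adj u v → G.Adj u' v' → ↑u ∈ A → ↑v ∈ B → ↑u' ∈ A → ↑v' ∈ B →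
        s(u, v) = s(u', v') := by
  intro A B _ _ hbA hbB hsep u v u' v' huv hu'v' huA hvB hu'A hv'B
  by_contra hne
  set M := max (Metric.diam A) (Metric.diam B) with hMdef
  have hM : 0 ≤ M := le_max_of_le_left Metric.diam_nonneg
  have hA : dist u u' ≤ M :=
    (Subtype.dist_eq u u').trans_le
      ((Metric.dist_le_diam_of_mem hbA huA hu'A).trans (le_max_left _ _))
  have hA' : dist u' u ≤ M := by rw [dist_comm]; exact hA
  have hB1 : dist v v' ≤ M :=
    (Subtype.dist_eq v v').trans_le
      ((Metric.dist_le_diam_of_mem hbB hvB hv'B).trans (le_max_right _ _))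
  have hB1' : dist v' v ≤ M := by rw [dist_comm]; exact hB1
  have hsuv : 2 * t / (t - 1) * M ≤ dist u v := by
    rw [Subtype.dist_eq, ← hs]
    exact hsep ↑u huA ↑v hvB
  have hsu'v' : 2 * t / (t - 1) * M ≤ dist u' v' := by
    rw [Subtype.dist_eq, ← hs]
    exact hsep ↑u' hu'A ↑v' hv'B
  rcases le_total (dist u' v') (dist u v) with h | h
  · exact aux_lem ht hi hii huv hu'v' hM hA hB1 hsuv h hne
  · exact aux_lem ht hi hii hu'v' huv hM hA' hB1' hsu'v' h (Ne.symm hne)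
end

section
/- Let t > 0 and let a, b, c, d be points of ℝ^d such that dist(a, c) > t·dist(c, d), dist(a, d) > t·dist(c, d), dist(b, c) > t·dist(c, d) and dist(b, d) > t·dist(c, d). Let G be any simple graph on a finite set V ⊆ ℝ^d with a, b, c, d ∈ V. Then every walk in G from c to d that traverses the edge {a, b} has length strictly greater than t·dist(c, d); in particular, no t-path between c and d uses the edge {a, b}. -/
lemma walkLength_nonneg {α : Type*} [PseudoMetricSpace α] {G : SimpleGraph α} {u v : α}
    (p : G.Walk u v) : 0 ≤ walkLength p := by
  apply List.sum_nonneg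
  intro x hx
  simp only [List.mem_map] at hx
  obtain ⟨e, _, rfl⟩ := hx
  exact dist_nonneg

lemma dist_le_walkLength {α : Type*} [PseudoMetricSpace α] {G : SimpleGraph α} {u v : α}
    (p : G.Walk u v) : dist u v ≤ walkLength p := by
  induction p with
  | nil => simp [walkLength]
  | @cons x y z h q ih =>
    simp only [walkLength, SimpleGraph.Walk.darts_cons, List.map_cons, List.sum_cons]
    calc dist x z ≤ dist x y + dist y z := dist_triangle _ _ _
      _ ≤ dist x y + walkLength q := by linarith
      _ = _ := rfl

lemma walkLength_append {α : Type*} [PseudoMetricSpace α] {G : SimpleGraph α} {u v w : α}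
    (p : G.Walk u v) (q : G.Walk v w) :
    walkLength (p.append q) = walkLength p + walkLength q := by
  simp [walkLength, SimpleGraph.Walk.darts_append]

lemma dist_le_of_mem_support {α : Type*} [PseudoMetricSpace α] [DecidableEq α] {G : SimpleGraph α} {u v x : α}
    (p : G.Walk u v) (hx : x ∈ p.support) : dist u x ≤ walkLength p := by
  have hspec := p.take_spec hx
  calc dist u x ≤ walkLength (p.takeUntil x hx) := dist_le_walkLength _
    _ ≤ walkLength (p.takeUntil x hx) + walkLength (p.dropUntil x hx) := by
        have := walkLength_nonneg (p.dropUntil x hx); linarith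
    _ = walkLength p := by rw [← walkLength_append, hspec]

/-- Let t > 0 and let a, b, c, d be points of ℝ^d such that
dist(a, c) > t·dist(c, d), dist(a, d) > t·dist(c, d), dist(b, c) > t·dist(c, d) and
dist(b, d) > t·dist(c, d). Let G be any simple graph on a finite set V ⊆ ℝ^d with
a, b, c, d ∈ V. Then every walk in G from c to d that traverses the edge {a, b} has
length strictly greater than t·dist(c, d); in particular, no t-path between c and d
uses the edge {a, b}. -/
theorem stmt_2 (n : ℕ) (t : ℝ) (ht : 0 < t) (a b c d : EuclideanSpace ℝ (Fin n))
    (hac : t * dist c d < dist a c) (had : t * dist c d < dist a d)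
    (hbc : t * dist c d < dist b c) (hbd : t * dist c d < dist b d)
    (V : Finset (EuclideanSpace ℝ (Fin n)))
    (ha : a ∈ V) (hb : b ∈ V) (hc : c ∈ V) (hd : d ∈ V)
    (G : SimpleGraph {p : EuclideanSpace ℝ (Fin n) // p ∈ V}) :
    ∀ w : G.Walk ⟨c, hc⟩ ⟨d, hd⟩,
      s((⟨a, ha⟩ : {p : EuclideanSpace ℝ (Fin n) // p ∈ V}),
        (⟨b, hb⟩ : {p : EuclideanSpace ℝ (Fin n) // p ∈ V})) ∈ w.edges →
      t * dist c d < walkLength w := by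
  classical
  intro w hw
  have hsupp : (⟨a, ha⟩ : {p : EuclideanSpace ℝ (Fin n) // p ∈ V}) ∈ w.support :=
    SimpleGraph.Walk.fst_mem_support_of_mem_edges w hw
  have h1 : dist (⟨c, hc⟩ : {p : EuclideanSpace ℝ (Fin n) // p ∈ V}) ⟨a, ha⟩ ≤ walkLength w :=
    dist_le_of_mem_support w hsupp
  rw [Subtype.dist_eq, dist_comm] at h1
  linarith
end

section
/- Let s ≥ 4. Let {A_i, B_i} and {A_j, B_j} be two pairs of nonempty subsets of ℝ^d, with A_i ⊆ closedBall(a_i, r_i), B_i ⊆ closedBall(b_i, ρ_i), A_j ⊆ closedBall(a_j, r_j), B_j ⊆ closedBall(b_j, ρ_j), each pair s-well-separated in the ball sense. If min(A_j, B_j) ≤ max(A_i, B_i) and min(A_i, B_i) ≤ max(A_j, B_j), then ℓ(A_i, B_i) ≤ 2·ℓ(A_j, B_j) and ℓ(A_j, B_j) ≤ 2·ℓ(A_i, B_i), i.e. the lengths of the two pairs differ by at most a factor 2. -/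
/-- Let s ≥ 4. Let {A_i, B_i} and {A_j, B_j} be two pairs of nonempty subsets
of ℝ^d, with A_i ⊆ closedBall(a_i, r_i), B_i ⊆ closedBall(b_i, ρ_i),
A_j ⊆ closedBall(a_j, r_j), B_j ⊆ closedBall(b_j, ρ_j), each pair s-well-separated in the
ball sense. If min(A_j, B_j) ≤ max(A_i, B_i) and min(A_i, B_i) ≤ max(A_j, B_j), then
ℓ(A_i, B_i) ≤ 2·ℓ(A_j, B_j) and ℓ(A_j, B_j) ≤ 2·ℓ(A_i, B_i), i.e. the lengths of the two
pairs differ by at most a factor 2. -/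
theorem stmt_6 (d : ℕ) (s : ℝ) (hs : 4 ≤ s)
    (ai bi aj bj : EuclideanSpace ℝ (Fin d)) (ri ρi rj ρj : ℝ)
    (Ai Bi Aj Bj : Set (EuclideanSpace ℝ (Fin d)))
    (hAi : Ai.Nonempty) (hBi : Bi.Nonempty) (hAj : Aj.Nonempty) (hBj : Bj.Nonempty)
    (hAisub : Ai ⊆ Metric.closedBall ai ri) (hBisub : Bi ⊆ Metric.closedBall bi ρi)
    (hAjsub : Aj ⊆ Metric.closedBall aj rj) (hBjsub : Bj ⊆ Metric.closedBall bj ρj)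
    (hsepi : s * max (2 * ri) (2 * ρi) ≤ dist ai bi - ri - ρi)
    (hsepj : s * max (2 * rj) (2 * ρj) ≤ dist aj bj - rj - ρj)
    (h1 : dist aj bj - rj - ρj ≤ dist ai bi + ri + ρi)
    (h2 : dist ai bi - ri - ρi ≤ dist aj bj + rj + ρj) :
    dist ai bi ≤ 2 * dist aj bj ∧ dist aj bj ≤ 2 * dist ai bi := by
  obtain ⟨x, hx⟩ := hAi
  obtain ⟨y, hy⟩ := hBi
  obtain ⟨u, hu⟩ := hAj
  obtain ⟨v, hv⟩ := hBj
  have hri : 0 ≤ ri := le_trans dist_nonneg (hAisub hx)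
  have hρi : 0 ≤ ρi := le_trans dist_nonneg (hBisub hy)
  have hrj : 0 ≤ rj := le_trans dist_nonneg (hAjsub hu)
  have hρj : 0 ≤ ρj := le_trans dist_nonneg (hBjsub hv)
  have hmi : ri + ρi ≤ max (2 * ri) (2 * ρi) := by
    rcases le_total ri ρi with h | h
    · calc ri + ρi ≤ 2 * ρi := by linarith
        _ ≤ _ := le_max_right _ _
    · calc ri + ρi ≤ 2 * ri := by linarith
        _ ≤ _ := le_max_left _ _
  have hmj : rj + ρj ≤ max (2 * rj) (2 * ρj) := by
    rcases le_total rj ρj with h | h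
    · calc rj + ρj ≤ 2 * ρj := by linarith
        _ ≤ _ := le_max_right _ _
    · calc rj + ρj ≤ 2 * rj := by linarith
        _ ≤ _ := le_max_left _ _
  have hi : 4 * (ri + ρi) ≤ dist ai bi - ri - ρi := by
    nlinarith [le_max_left (2*ri) (2*ρi), le_max_right (2*ri) (2*ρi)]
  have hj : 4 * (rj + ρj) ≤ dist aj bj - rj - ρj := by
    nlinarith [le_max_left (2*rj) (2*ρj), le_max_right (2*rj) (2*ρj)]
  constructor <;> linarith
end

section
/- Let t ≥ 1, let u, p, q, c ∈ ℝ^d, let r ≥ 0 and let D ≥ 0. Suppose t·dist(u, p) + D + t·(dist(q, c) + r) ≤ t·(dist(u, c) − r). Then for every point b in the closed ball of center c and radius r one has t·dist(u, p) + D + t·dist(q, b) ≤ t·dist(u, b). Consequently, if a graph on points of ℝ^d contains a walk from u to p of length at most t·dist(u, p), a walk from p to q of length D, and a walk from q to b of length at most t·dist(q, b), then it contains a walk from u to b of length at most t·dist(u, b). -/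
/-- Let t ≥ 1, let u, p, q, c ∈ ℝ^d, let r ≥ 0 and let D ≥ 0. Suppose
t·dist(u, p) + D + t·(dist(q, c) + r) ≤ t·(dist(u, c) − r). Then for every point b in the
closed ball of center c and radius r one has
t·dist(u, p) + D + t·dist(q, b) ≤ t·dist(u, b). Consequently, if a graph on points of ℝ^d
contains a walk from u to p of length at most t·dist(u, p), a walk from p to q of length D,
and a walk from q to b of length at most t·dist(q, b), then it contains a walk from u to b
of length at most t·dist(u, b). -/
theorem stmt_7 (n : ℕ) (t : ℝ) (ht : 1 ≤ t) (u p q c : EuclideanSpace ℝ (Fin n))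
    (r D : ℝ) (hr : 0 ≤ r) (hD : 0 ≤ D)
    (h : t * dist u p + D + t * (dist q c + r) ≤ t * (dist u c - r)) :
    ∀ b ∈ Metric.closedBall c r,
      (t * dist u p + D + t * dist q b ≤ t * dist u b) ∧
      ∀ G : SimpleGraph (EuclideanSpace ℝ (Fin n)),
        (∃ w1 : G.Walk u p, walkLength w1 ≤ t * dist u p) →
        (∃ w2 : G.Walk p q, walkLength w2 = D) →
        (∃ w3 : G.Walk q b, walkLength w3 ≤ t * dist q b) →
        ∃ w : G.Walk u b, walkLength w ≤ t * dist u b := by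
  intro b hb
  rw [Metric.mem_closedBall] at hb
  have ht0 : 0 ≤ t := le_trans zero_le_one ht
  have h1 : dist q b ≤ dist q c + r := le_trans (dist_triangle q c b)
    (by have := (dist_comm b c ▸ hb); linarith)
  have h2 : dist u c - r ≤ dist u b := by
    have := dist_triangle u b c
    have : dist b c ≤ r := dist_comm b c ▸ hb
    have := dist_triangle u b c
    linarith
  have key : t * dist u p + D + t * dist q b ≤ t * dist u b := by
    have := mul_le_mul_of_nonneg_left h1 ht0
    have := mul_le_mul_of_nonneg_left h2 ht0
    linarith
  refine ⟨key, ?_⟩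
  rintro G ⟨w1, hw1⟩ ⟨w2, hw2⟩ ⟨w3, hw3⟩
  exact ⟨(w1.append w2).append w3, by
    rw [walkLength_append, walkLength_append]; linarith⟩
end

section
/- Let t > 1, let s ≥ 2t/(t−1), and let A, B ⊆ ℝ^d be nonempty bounded s-well-separated subsets of a finite set V ⊆ ℝ^d. Let G be a simple graph on V containing the edge {u, v} with u ∈ A and v ∈ B. Let x ∈ A and y ∈ B with dist(u, v) ≤ dist(x, y). If G contains a walk from x to u of length at most t·dist(x, u) and a walk from v to y of length at most t·dist(v, y), then G contains a walk from x to y of length at most t·dist(x, y). -/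
/-- Let t > 1, let s ≥ 2t/(t−1), and let A, B ⊆ ℝ^d be nonempty bounded
s-well-separated subsets of a finite set V ⊆ ℝ^d. Let G be a simple graph on V containing
the edge {u, v} with u ∈ A and v ∈ B. Let x ∈ A and y ∈ B with dist(u, v) ≤ dist(x, y).
If G contains a walk from x to u of length at most t·dist(x, u) and a walk from v to y of
length at most t·dist(v, y), then G contains a walk from x to y of length at most
t·dist(x, y). -/
theorem stmt_9 (d : ℕ) (t s : ℝ) (ht : 1 < t) (hs : 2 * t / (t - 1) ≤ s)
    (V : Finset (EuclideanSpace ℝ (Fin d)))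
    (A B : Set (EuclideanSpace ℝ (Fin d))) (hA : A.Nonempty) (hB : B.Nonempty)
    (hAb : Bornology.IsBounded A) (hBb : Bornology.IsBounded B)
    (hAV : A ⊆ ↑V) (hBV : B ⊆ ↑V)
    (hsep : ∀ a ∈ A, ∀ b ∈ B, s * max (Metric.diam A) (Metric.diam B) ≤ dist a b)
    (G : SimpleGraph {p : EuclideanSpace ℝ (Fin d) // p ∈ V})
    (u v x y : {p : EuclideanSpace ℝ (Fin d) // p ∈ V})
    (huv : G.Adj u v) (hu : ↑u ∈ A) (hv : ↑v ∈ B) (hx : ↑x ∈ A) (hy : ↑y ∈ B)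
    (hle : dist u.val v.val ≤ dist x.val y.val)
    (hw1 : ∃ w : G.Walk x u, walkLength w ≤ t * dist x.val u.val)
    (hw2 : ∃ w : G.Walk v y, walkLength w ≤ t * dist v.val y.val) :
    ∃ w : G.Walk x y, walkLength w ≤ t * dist x.val y.val := by
  obtain ⟨w1, h1⟩ := hw1
  obtain ⟨w2, h2⟩ := hw2
  refine ⟨w1.append (SimpleGraph.Walk.cons huv w2), ?_⟩
  have hlen : walkLength (w1.append (SimpleGraph.Walk.cons huv w2))
      = walkLength w1 + dist u.val v.val + walkLength w2 := by
    simp [walkLength, SimpleGraph.Walk.darts_append, Subtype.dist_eq]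
    ring
  rw [hlen]
  set M := max (Metric.diam A) (Metric.diam B) with hM
  have hxu : dist x.val u.val ≤ M :=
    le_trans (Metric.dist_le_diam_of_mem hAb hx hu) (le_max_left _ _)
  have hvy : dist v.val y.val ≤ M :=
    le_trans (Metric.dist_le_diam_of_mem hBb hv hy) (le_max_right _ _)
  have hM0 : 0 ≤ M := le_trans Metric.diam_nonneg (le_max_left _ _)
  have hxy : s * M ≤ dist x.val y.val := hsep _ hx _ hy
  have ht1 : 0 < t - 1 := by linarith
  have hs' : 2 * t ≤ s * (t - 1) := by
    rw [div_le_iff₀ ht1] at hs; linarith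
  have hd0 : 0 ≤ dist x.val u.val := dist_nonneg
  have hd1 : 0 ≤ dist v.val y.val := dist_nonneg
  nlinarith [mul_le_mul_of_nonneg_right hs' hM0, mul_le_mul_of_nonneg_left hxu (le_of_lt (lt_trans one_pos ht)), mul_le_mul_of_nonneg_left hvy (le_of_lt (lt_trans one_pos ht))]
end

section
/- Let 1 < t, let s = 2t/(t−1), let V ⊆ ℝ^d be a finite set, and let (A_1, B_1), …, (A_m, B_m) be a well-separated pair decomposition of V with separation s: each A_i, B_i is a nonempty subset of V, each pair (A_i, B_i) is s-well-separated, and for every pair of distinct points u, v ∈ V there is exactly one index i with (u ∈ A_i and v ∈ B_i) or (v ∈ A_i and u ∈ B_i). Let G be a simple graph on V satisfying: (i) for every two distinct p, q ∈ V there is a walk in G from p to q of length at most t·dist(p, q) all of whose edges {a, b} satisfy dist(a, b) ≤ dist(p, q); and (ii) for every edge {x, y} of G, every walk in G from x to y that does not traverse the edge {x, y} and all of whose edges {a, b} satisfy dist(a, b) ≤ dist(x, y) has length strictly greater than t·dist(x, y). Then G has at most m edges. -/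
/-- Let 1 < t, let s = 2t/(t−1), let V ⊆ ℝ^d be a finite set, and let
(A_1, B_1), …, (A_m, B_m) be a well-separated pair decomposition of V with separation s:
each A_i, B_i is a nonempty subset of V, each pair (A_i, B_i) is s-well-separated, and for
every pair of distinct points u, v ∈ V there is exactly one index i with
(u ∈ A_i and v ∈ B_i) or (v ∈ A_i and u ∈ B_i). Let G be a simple graph on V satisfying:
(i) for every two distinct p, q ∈ V there is a walk in G from p to q of length at most
t·dist(p, q) all of whose edges {a, b} satisfy dist(a, b) ≤ dist(p, q); and (ii) for every
edge {x, y} of G, every walk in G from x to y that does not traverse the edge {x, y} and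
all of whose edges {a, b} satisfy dist(a, b) ≤ dist(x, y) has length strictly greater than
t·dist(x, y). Then G has at most m edges. -/
theorem stmt_10 (d : ℕ) (t : ℝ) (ht : 1 < t) (s : ℝ) (hs : s = 2 * t / (t - 1))
    (V : Finset (EuclideanSpace ℝ (Fin d))) (m : ℕ)
    (A B : Fin m → Set (EuclideanSpace ℝ (Fin d)))
    (hA : ∀ i, (A i).Nonempty) (hB : ∀ i, (B i).Nonempty)
    (hAV : ∀ i, A i ⊆ ↑V) (hBV : ∀ i, B i ⊆ ↑V)
    (hsep : ∀ i, ∀ a ∈ A i, ∀ b ∈ B i,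
      s * max (Metric.diam (A i)) (Metric.diam (B i)) ≤ dist a b)
    (hcover : ∀ u ∈ V, ∀ v ∈ V, u ≠ v →
      ∃! i : Fin m, (u ∈ A i ∧ v ∈ B i) ∨ (v ∈ A i ∧ u ∈ B i))
    (G : SimpleGraph {p : EuclideanSpace ℝ (Fin d) // p ∈ V})
    (hi : ∀ p q : {p : EuclideanSpace ℝ (Fin d) // p ∈ V}, p ≠ q →
      ∃ w : G.Walk p q, walkLength w ≤ t * dist p q ∧
        ∀ e ∈ w.darts, dist e.toProd.1 e.toProd.2 ≤ dist p q)
    (hii : ∀ x y : {p : EuclideanSpace ℝ (Fin d) // p ∈ V}, G.Adj x y →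
      ∀ w : G.Walk x y, s(x, y) ∉ w.edges →
        (∀ e ∈ w.darts, dist e.toProd.1 e.toProd.2 ≤ dist x y) →
        t * dist x y < walkLength w) :
    G.edgeSet.ncard ≤ m := by
  have ht0 : (0:ℝ) < t := by linarith
  have hi' : ∀ p q : {p : EuclideanSpace ℝ (Fin d) // p ∈ V},
      ∃ w : G.Walk p q, walkLength w ≤ t * dist p q ∧
        ∀ e ∈ w.darts, dist e.toProd.1 e.toProd.2 ≤ dist p q := by
    intro p q
    rcases eq_or_ne p q with rfl | h
    · exact ⟨.nil, by simp [walkLength], by simp⟩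
    · exact hi p q h
  have key : ∀ (i : Fin m) (x y u v : {p : EuclideanSpace ℝ (Fin d) // p ∈ V}),
      G.Adj x y → G.Adj u v → x.1 ∈ A i → y.1 ∈ B i → u.1 ∈ A i → v.1 ∈ B i →
      s(x, y) ≠ s(u, v) → dist u v ≤ dist x y → False := by
    intro i x y u v hxy huv hx hy hu hv hne hle
    set D := max (Metric.diam (A i)) (Metric.diam (B i)) with hD
    have hbA : Bornology.IsBounded (A i) := (V.finite_toSet.subset (hAV i)).isBounded
    have hbB : Bornology.IsBounded (B i) := (V.finite_toSet.subset (hBV i)).isBounded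
    have hxu : dist x u ≤ D := by
      rw [Subtype.dist_eq]
      exact le_trans (Metric.dist_le_diam_of_mem hbA hx hu) (le_max_left _ _)
    have hvy : dist v y ≤ D := by
      rw [Subtype.dist_eq]
      exact le_trans (Metric.dist_le_diam_of_mem hbB hv hy) (le_max_right _ _)
    have hD0 : 0 ≤ D := le_trans Metric.diam_nonneg (le_max_left _ _)
    have hsD : s * D ≤ dist x y := by
      rw [Subtype.dist_eq]; exact hsep i _ hx _ hy
    have hdxy0 : 0 < dist x y := dist_pos.2 hxy.ne
    have hs2 : 2 < s := by
      rw [hs, lt_div_iff₀ (by linarith)]; linarith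
    have hDlt : D < dist x y := by nlinarith
    obtain ⟨w1, hw1l, hw1d⟩ := hi' x u
    obtain ⟨w2, hw2l, hw2d⟩ := hi' v y
    set w : G.Walk x y := w1.append (SimpleGraph.Walk.cons huv w2) with hw
    have hdarts : ∀ e ∈ w.darts, dist e.toProd.1 e.toProd.2 ≤ dist x y ∧ e.edge ≠ s(x, y) := by
      intro e he
      rw [hw, SimpleGraph.Walk.darts_append, SimpleGraph.Walk.darts_cons] at he
      rcases List.mem_append.1 he with h1 | h23
      · have hlt : dist e.toProd.1 e.toProd.2 < dist x y :=
          lt_of_le_of_lt (le_trans (hw1d e h1) hxu) hDlt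
        refine ⟨hlt.le, fun hedge => ?_⟩
        have hed : s(e.toProd.1, e.toProd.2) = s(x, y) := by
          rwa [SimpleGraph.Dart.edge, ← Prod.mk.eta (p := e.toProd)] at hedge
        rcases Sym2.eq_iff.1 hed with ⟨h1', h2'⟩ | ⟨h1', h2'⟩
        · rw [h1', h2'] at hlt; exact lt_irrefl _ hlt
        · rw [h1', h2', dist_comm] at hlt; exact lt_irrefl _ hlt
      · rcases List.mem_cons.1 h23 with h2 | h3
        · subst h2
          refine ⟨hle, fun hedge => ?_⟩
          have hed : s(u, v) = s(x, y) := by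
            rwa [SimpleGraph.Dart.edge] at hedge
          exact hne hed.symm
        · have hlt : dist e.toProd.1 e.toProd.2 < dist x y :=
            lt_of_le_of_lt (le_trans (hw2d e h3) hvy) hDlt
          refine ⟨hlt.le, fun hedge => ?_⟩
          have hed : s(e.toProd.1, e.toProd.2) = s(x, y) := by
            rwa [SimpleGraph.Dart.edge, ← Prod.mk.eta (p := e.toProd)] at hedge
          rcases Sym2.eq_iff.1 hed with ⟨h1', h2'⟩ | ⟨h1', h2'⟩
          · rw [h1', h2'] at hlt; exact lt_irrefl _ hlt
          · rw [h1', h2', dist_comm] at hlt; exact lt_irrefl _ hlt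
    have hnot : s(x, y) ∉ w.edges := by
      intro hmem
      rw [SimpleGraph.Walk.edges] at hmem
      obtain ⟨dd, hdd, hde⟩ := List.mem_map.1 hmem
      exact (hdarts dd hdd).2 hde
    have hlong := hii x y hxy w hnot (fun e he => (hdarts e he).1)
    have hwl : walkLength w = walkLength w1 + (dist u v + walkLength w2) := by
      simp [hw, walkLength, SimpleGraph.Walk.darts_append]
    have h1 : t * dist x u ≤ t * D := by nlinarith
    have h2 : t * dist v y ≤ t * D := by nlinarith
    have hst : s * (t - 1) = 2 * t := by
      rw [hs, div_mul_cancel₀ _ (ne_of_gt (by linarith : (0:ℝ) < t - 1))]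
    nlinarith [mul_le_mul_of_nonneg_left hsD (by linarith : (0:ℝ) ≤ t - 1)]
  -- choice of index for each edge
  have hex : ∀ e ∈ G.edgeSet, ∃ i : Fin m,
      ∃ x y : {p : EuclideanSpace ℝ (Fin d) // p ∈ V},
        G.Adj x y ∧ e = s(x, y) ∧ x.1 ∈ A i ∧ y.1 ∈ B i := by
    intro e he
    induction e with
    | h x y =>
      have hadj : G.Adj x y := he
      have hne : x.1 ≠ y.1 := fun h => hadj.ne (Subtype.ext h)
      obtain ⟨i, hi1, _⟩ := hcover x.1 x.2 y.1 y.2 hne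
      rcases hi1 with ⟨ha, hb⟩ | ⟨ha, hb⟩
      · exact ⟨i, x, y, hadj, rfl, ha, hb⟩
      · exact ⟨i, y, x, hadj.symm, Sym2.eq_swap.symm, ha, hb⟩
  let f : G.edgeSet → Fin m := fun e => (hex e.1 e.2).choose
  have hfinj : Function.Injective f := by
    intro e1 e2 hfe
    obtain ⟨x, y, hxy, hexy, hxA, hyB⟩ := (hex e1.1 e1.2).choose_spec
    obtain ⟨u, v, huv, heuv, huA, hvB⟩ := (hex e2.1 e2.2).choose_spec
    by_contra hne12
    have hne : s(x, y) ≠ s(u, v) := by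
      intro h
      apply hne12
      apply Subtype.ext
      rw [hexy, heuv, h]
    rw [show f e1 = (hex e1.1 e1.2).choose from rfl] at hfe
    rw [show f e2 = (hex e2.1 e2.2).choose from rfl] at hfe
    rw [hfe] at hxA hyB
    rcases le_total (dist u v) (dist x y) with hle | hle
    · exact key _ x y u v hxy huv hxA hyB huA hvB hne hle
    · exact key _ u v x y huv hxy huA hvB hxA hyB (Ne.symm hne) hle
  have hcard : Nat.card G.edgeSet ≤ Nat.card (Fin m) :=
    Nat.card_le_card_of_injective f hfinj
  rw [← Nat.card_coe_set_eq]
  simpa using hcard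
end
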